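/- Let V, W be finite-dimensional complex Hermitian vector spaces and (B₁, B₂, i, j) a stable ADHM datum (no proper subspace S ⊊ V with B₁(S) ⊆ S, B₂(S) ⊆ S, i(W) ⊆ S). Then the linear map Dμ : End(V)⊕End(V)⊕Hom(W,V)⊕Hom(V,W) → End(V) given by Dμ(b₁,b₂,c,d) = [b₁,B₂] + [B₁,b₂] + i∘d + c∘j is surjective. -/

import Mathlib

variable {V W : Type*} [AddCommGroup V] [Module ℂ V] [AddCommGroup W] [Module ℂ W]
  [FiniteDimensional ℂ V] [FiniteDimensional ℂ W]

def ADHMStable (B₁ B₂ : V →ₗ[ℂ] V) (i : W →ₗ[ℂ] V) : Prop :=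
  ∀ S : Submodule ℂ V, S ≠ ⊤ → (∀ v ∈ S, B₁ v ∈ S) → (∀ v ∈ S, B₂ v ∈ S) →
    ¬ LinearMap.range i ≤ S

open LinearMap Module

lemma trace_smulRight_aux (f : Module.Dual ℂ V) (v : V) :
    LinearMap.trace ℂ V (f.smulRight v) = f v := by
  have e : f.smulRight v = dualTensorHom ℂ V V (f ⊗ₜ[ℂ] v) := by ext u; simp
  rw [e, LinearMap.trace_eq_contract_apply ℂ V (f ⊗ₜ[ℂ] v), contractLeft_apply]

/-- If the trace of `c ∘ m` vanishes for all `c : W →ₗ V`, then `m = 0`. -/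
lemma eq_zero_of_trace_comp (m : V →ₗ[ℂ] W)
    (h : ∀ c : W →ₗ[ℂ] V, LinearMap.trace ℂ V (c ∘ₗ m) = 0) : m = 0 := by
  ext v
  rw [LinearMap.zero_apply, ← Module.forall_dual_apply_eq_zero_iff ℂ]
  intro g
  have := h (g.smulRight v)
  have heq : ((g.smulRight v) ∘ₗ m) = (g ∘ₗ m).smulRight v := by
    ext u; simp
  rw [heq, trace_smulRight_aux] at this
  simpa using this

lemma comm_trace_aux (b C X : V →ₗ[ℂ] V) :
    LinearMap.trace ℂ V ((b * C - C * b) * X)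
      = LinearMap.trace ℂ V (b * (C * X - X * C)) := by
  rw [sub_mul, map_sub, mul_sub, map_sub, mul_assoc b C X, mul_assoc C b X,
    LinearMap.trace_mul_comm ℂ C (b * X), mul_assoc b X C]

/-- Trace pairing surjectivity: every functional on `End V` is `A ↦ trace (A ∘ X)`. -/
lemma exists_trace_rep (φ : Module.Dual ℂ (V →ₗ[ℂ] V)) :
    ∃ X : V →ₗ[ℂ] V, ∀ A : V →ₗ[ℂ] V, φ A = LinearMap.trace ℂ V (A ∘ₗ X) := by
  let Φ : (V →ₗ[ℂ] V) →ₗ[ℂ] Module.Dual ℂ (V →ₗ[ℂ] V) :=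
    { toFun := fun X => (LinearMap.trace ℂ V) ∘ₗ (LinearMap.llcomp ℂ V V V).flip X
      map_add' := by intro X Y; ext A; simp
      map_smul' := by intro c X; ext A; simp }
  have hΦ : ∀ X A, Φ X A = LinearMap.trace ℂ V (A ∘ₗ X) := fun X A => rfl
  have hinj : Function.Injective Φ := by
    rw [injective_iff_map_eq_zero]
    intro X hX
    refine eq_zero_of_trace_comp X (fun c => ?_)
    have := congrFun (congrArg DFunLike.coe hX) c
    simpa [hΦ] using this
  have hsurj : Function.Surjective Φ :=
    (LinearMap.injective_iff_surjective_of_finrank_eq_finrank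
      (Subspace.dual_finrank_eq).symm).mp hinj
  obtain ⟨X, hx⟩ := hsurj φ
  exact ⟨X, fun A => by rw [← hx, hΦ]⟩

theorem derivative_moment_map_surjective_of_stable
    (B₁ B₂ : V →ₗ[ℂ] V) (i : W →ₗ[ℂ] V) (j : V →ₗ[ℂ] W)
    (hstab : ADHMStable B₁ B₂ i) :
    Function.Surjective
      (fun bd : (V →ₗ[ℂ] V) × (V →ₗ[ℂ] V) × (W →ₗ[ℂ] V) × (V →ₗ[ℂ] W) =>
        bd.1 ∘ₗ B₂ - B₂ ∘ₗ bd.1 + (B₁ ∘ₗ bd.2.1 - bd.2.1 ∘ₗ B₁) +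
          i ∘ₗ bd.2.2.2 + bd.2.2.1 ∘ₗ j) := by
  -- bundle the map as a linear map
  let L : ((V →ₗ[ℂ] V) × (V →ₗ[ℂ] V) × (W →ₗ[ℂ] V) × (V →ₗ[ℂ] W)) →ₗ[ℂ] (V →ₗ[ℂ] V) :=
    { toFun := fun bd =>
        bd.1 ∘ₗ B₂ - B₂ ∘ₗ bd.1 + (B₁ ∘ₗ bd.2.1 - bd.2.1 ∘ₗ B₁) +
          i ∘ₗ bd.2.2.2 + bd.2.2.1 ∘ₗ j
      map_add' := by
        rintro ⟨a1, a2, a3, a4⟩ ⟨b1, b2, b3, b4⟩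
        ext v
        simp only [Prod.fst_add, Prod.snd_add, LinearMap.add_apply, comp_apply, LinearMap.sub_apply,
          map_add]
        abel
      map_smul' := by
        rintro c ⟨a1, a2, a3, a4⟩
        ext v
        simp only [Prod.smul_fst, Prod.smul_snd, LinearMap.smul_apply, comp_apply, LinearMap.sub_apply,
          LinearMap.add_apply, map_smul, RingHom.id_apply]
        module }
  suffices h : Function.Surjective L by exact h
  rw [← LinearMap.dualMap_injective_iff, injective_iff_map_eq_zero]
  intro φ hφ
  have hall : ∀ bd, φ (L bd) = 0 := fun bd => congrFun (congrArg DFunLike.coe hφ) bd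
  obtain ⟨X, hX⟩ := exists_trace_rep (V := V) φ
  -- slot 1 : X commutes with B₂
  have h2 : B₂ * X - X * B₂ = 0 := by
    refine eq_zero_of_trace_comp _ (fun b => ?_)
    have hb := hall (b, 0, 0, 0)
    simp only [L, LinearMap.coe_mk, AddHom.coe_mk, comp_zero, zero_comp, sub_zero,
      add_zero] at hb
    rw [hX] at hb
    simp only [← Module.End.mul_eq_comp] at hb ⊢
    rwa [comm_trace_aux] at hb
  -- slot 2 : X commutes with B₁
  have h1 : B₁ * X - X * B₁ = 0 := by
    refine eq_zero_of_trace_comp _ (fun b => ?_)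
    have hb := hall (0, b, 0, 0)
    simp only [L, LinearMap.coe_mk, AddHom.coe_mk, comp_zero, zero_comp, sub_zero,
      zero_sub, zero_add, add_zero] at hb
    rw [hX] at hb
    have : (B₁ ∘ₗ b - b ∘ₗ B₁) ∘ₗ X = -((b * B₁ - B₁ * b) * X) := by
      simp only [Module.End.mul_eq_comp]; ext v; simp
    rw [this, map_neg, neg_eq_zero, comm_trace_aux] at hb
    simp only [← Module.End.mul_eq_comp]
    exact hb
  -- slot 4 : X ∘ i = 0
  have h4 : X ∘ₗ i = 0 := by
    refine eq_zero_of_trace_comp _ (fun d => ?_)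
    have hd := hall (0, 0, 0, d)
    simp only [L, LinearMap.coe_mk, AddHom.coe_mk, comp_zero, zero_comp, sub_zero,
      sub_self, zero_add, add_zero,] at hd
    rw [hX] at hd
    have e1 : (i ∘ₗ d) ∘ₗ X = i ∘ₗ (d ∘ₗ X) := by ext v; simp
    rw [e1, LinearMap.trace_comp_comm' (d ∘ₗ X) i] at hd
    have e2 : (d ∘ₗ X) ∘ₗ i = d ∘ₗ (X ∘ₗ i) := by ext w; simp
    rwa [e2] at hd
  -- stability forces X = 0
  have hX0 : X = 0 := by
    by_contra hne
    have hker : LinearMap.ker X ≠ ⊤ := by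
      intro h
      exact hne (LinearMap.ker_eq_top.mp h)
    refine hstab (LinearMap.ker X) hker ?_ ?_ ?_
    · intro v hv
      have := congrFun (congrArg DFunLike.coe h1) v
      simp only [LinearMap.sub_apply, Module.End.mul_apply, LinearMap.zero_apply,
        sub_eq_zero] at this
      simp only [LinearMap.mem_ker] at hv ⊢
      rw [← this, hv, map_zero]
    · intro v hv
      have := congrFun (congrArg DFunLike.coe h2) v
      simp only [LinearMap.sub_apply, Module.End.mul_apply, LinearMap.zero_apply,
        sub_eq_zero] at this
      simp only [LinearMap.mem_ker] at hv ⊢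
      rw [← this, hv, map_zero]
    · rintro _ ⟨w, rfl⟩
      simp only [LinearMap.mem_ker]
      have := congrFun (congrArg DFunLike.coe h4) w
      simpa using this
  ext A
  rw [hX, hX0]
  simp
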